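/- Suppose m < n = q and set ν = (n−m)/(q(s−1)). If λ + ν < 0, then for every σ > 0 there exist δ > 0 and t1 ≥ t0 such that every admissible solution with v(t1) ≤ δ satisfies v(t) ≤ v(t1)·(t/t1)^{λ+σ} for all t ≥ t1 (polynomial stability). If λ + ν > 0 and γ < 0, then there exist δ > 0, t1 ≥ t0 and K > 0 such that every admissible solution with v(t1) ≤ δ satisfies v(t) ≤ K·t^{−ν} for all t ≥ t1 (polynomial stability). -/

import Mathlib

/-- An admissible solution of the reduced equation
`v'(t) = γ·t^{−m/q}·v(t)^s + λ·t^{−n/q}·v(t) + ρ(t)` on `[t0,∞)` with values in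
`[0,d0]`, where `|ρ(t)| ≤ M·(t^{−m/q}·v(t)^s + t^{−n/q}·v(t))·(v(t) + t^{−1/q})`. -/
def IsAdmissible (q m n s : ℕ) (γ lam d0 t0 M : ℝ) (v : ℝ → ℝ) : Prop :=
  (∀ t ≥ t0, v t ∈ Set.Icc (0:ℝ) d0) ∧
  ∃ ρ : ℝ → ℝ,
    (∀ t ≥ t0, |ρ t| ≤
      M * (t ^ (-(m:ℝ)/(q:ℝ)) * v t ^ s + t ^ (-(n:ℝ)/(q:ℝ)) * v t)
        * (v t + t ^ (-(1:ℝ)/(q:ℝ)))) ∧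
    (∀ t ≥ t0, HasDerivAt v
      (γ * t ^ (-(m:ℝ)/(q:ℝ)) * v t ^ s + lam * t ^ (-(n:ℝ)/(q:ℝ)) * v t + ρ t) t)

/-!
With `n = q` the linear term is `λ v / t`, and along `v = c t^{-ν}` the nonlinear term
`t^{-m/q} v^s` equals `c^{s-1} v / t`: both scale like `v / t`. Write the equation as
`v' ≤ (γ β + λ + O(v + t^{-1/q})) v / t`, where `β` is the ratio of the nonlinear to the linear
term, and compare `v` with power curves `C (t/t1)^A`: at a touching point it suffices that the
bracket is `< A`. If `λ + ν < 0`, a curve with `λ < A ≤ min(λ + σ, -ν)` stays below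
`C t1^ν t^{-ν}`, so `β` and the remainder are small for small `C` and large `t1`; letting
`C ↓ v(t1)` gives the first bound. If `γ < 0`, on the curve `K t^{-ν}` we have `β = K^{s-1}`,
and a very negative `γ K^{s-1}` pushes the bracket below `A = -ν`.
-/

open Real Set Filter Topology

theorem le_mul_div_rpow_of_hasDerivAt {v v' : ℝ → ℝ} {t1 C A : ℝ} (ht1 : 0 < t1)
    (hv : ∀ r ≥ t1, HasDerivAt v (v' r) r) (h1 : v t1 ≤ C)
    (hcross : ∀ r ≥ t1, v r = C * (r / t1) ^ A → v' r < A * (v r / r)) :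
    ∀ t ≥ t1, v t ≤ C * (t / t1) ^ A := by
  have hw : ∀ r ≥ t1, HasDerivAt (fun r => C * (r / t1) ^ A) (A * (C * (r / t1) ^ A / r)) r := by
    intro r hr
    have hr0 : 0 < r := ht1.trans_le hr
    have h := (((hasDerivAt_id r).div_const t1).rpow_const (p := A)
      (Or.inl (div_pos hr0 ht1).ne')).const_mul C
    refine h.congr_deriv ?_
    rw [id_eq, rpow_sub_one (div_pos hr0 ht1).ne']
    field_simp
  intro t ht
  refine image_le_of_deriv_right_lt_deriv_boundary'
    (fun r hr => (hv r hr.1).continuousAt.continuousWithinAt)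
    (fun r hr => (hv r hr.1).hasDerivWithinAt) (by simpa [div_self ht1.ne'] using h1)
    (fun r hr => (hw r hr.1).continuousAt.continuousWithinAt)
    (fun r hr => (hw r hr.1).hasDerivWithinAt)
    (fun r hr hvr => ?_) ⟨ht, le_rfl⟩
  simpa only [hvr] using hcross r hr.1 hvr

theorem tendsto_rpow_neg_one_div_atTop {q : ℕ} (hq : q ≠ 0) :
    Tendsto (fun t : ℝ => t ^ (-(1:ℝ)/q)) atTop (𝓝 0) := by
  simpa only [neg_div] using tendsto_rpow_neg_atTop (by positivity : (0:ℝ) < 1 / q)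

/-- The ratio `t^{-m/q} x^s / (t^{-1} x)` of the nonlinear term to the linear term. -/
noncomputable def nonlinearRatio (q m s : ℕ) (t x : ℝ) : ℝ := t * t ^ (-(m:ℝ)/(q:ℝ)) * x ^ (s - 1)

theorem nonlinearRatio_nonneg {q m s : ℕ} {t x : ℝ} (ht : 0 ≤ t) (hx : 0 ≤ x) :
    0 ≤ nonlinearRatio q m s t x := by
  unfold nonlinearRatio; positivity

theorem nonlinearRatio_mul_rpow_neg {q m s : ℕ} {ν t c : ℝ} (hs : 1 ≤ s) (ht : 0 < t)
    (hν : ν * ((s:ℝ) - 1) = 1 - (m:ℝ) / q) :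
    nonlinearRatio q m s t (c * t ^ (-ν)) = c ^ (s - 1) := by
  have hexp : 1 + -(m:ℝ) / q + -ν * ((s - 1 : ℕ) : ℝ) = 0 := by
    rw [Nat.cast_sub hs, neg_div]; push_cast; linarith
  rw [nonlinearRatio, mul_pow, ← rpow_natCast (t ^ (-ν)), ← rpow_mul ht.le]
  calc t * t ^ (-(m:ℝ) / q) * (c ^ (s - 1) * t ^ (-ν * ((s - 1 : ℕ) : ℝ)))
      = c ^ (s - 1) * t ^ (1 + -(m:ℝ) / q + -ν * ((s - 1 : ℕ) : ℝ)) := by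
        rw [rpow_add ht, rpow_add ht, rpow_one]; ring
    _ = c ^ (s - 1) := by rw [hexp, rpow_zero, mul_one]

theorem nonlinearRatio_le_of_le_mul_rpow_neg {q m s : ℕ} {ν t c x : ℝ} (hs : 1 ≤ s) (ht : 0 < t)
    (hν : ν * ((s:ℝ) - 1) = 1 - (m:ℝ) / q) (hx0 : 0 ≤ x) (hx : x ≤ c * t ^ (-ν)) :
    nonlinearRatio q m s t x ≤ c ^ (s - 1) := by
  rw [← nonlinearRatio_mul_rpow_neg hs ht hν]
  unfold nonlinearRatio
  gcongr

theorem IsAdmissible.exists_hasDerivAt_le {q m s : ℕ} {γ lam d0 t0 M : ℝ} {v : ℝ → ℝ}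
    (hv : IsAdmissible q m q s γ lam d0 t0 M v) (hq : q ≠ 0) (hs : 1 ≤ s) (ht0 : 0 < t0) :
    ∃ v' : ℝ → ℝ, (∀ t ≥ t0, HasDerivAt v (v' t) t) ∧ ∀ t ≥ t0,
      v' t ≤ (γ * nonlinearRatio q m s t (v t) + lam
        + M * (nonlinearRatio q m s t (v t) + 1) * (v t + t ^ (-(1:ℝ)/q))) * (v t / t) := by
  obtain ⟨-, ρ, hρ, hderiv⟩ := hv
  refine ⟨_, hderiv, fun t ht => ?_⟩
  have ht0' : t ≠ 0 := (ht0.trans_le ht).ne'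
  have hsplit : t ^ (-(m:ℝ)/q) * v t ^ s = nonlinearRatio q m s t (v t) * (v t / t) := by
    rw [nonlinearRatio, ← Nat.sub_add_cancel hs, pow_succ, Nat.add_sub_cancel]
    field_simp
  have hlin : t ^ (-(q:ℝ)/q) = t⁻¹ := by
    rw [neg_div, div_self (by exact_mod_cast hq), rpow_neg_one]
  have hρt := hρ t ht
  rw [hsplit, hlin] at hρt
  rw [mul_assoc γ, hsplit, hlin]
  set β := nonlinearRatio q m s t (v t)
  have hexpand : M * (β * (v t / t) + t⁻¹ * v t) * (v t + t ^ (-(1:ℝ)/q))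
      = M * (β + 1) * (v t + t ^ (-(1:ℝ)/q)) * (v t / t) := by ring
  calc γ * (β * (v t / t)) + lam * t⁻¹ * v t + ρ t = (γ * β + lam) * (v t / t) + ρ t := by ring
    _ ≤ (γ * β + lam) * (v t / t) + M * (β + 1) * (v t + t ^ (-(1:ℝ)/q)) * (v t / t) := by
      gcongr; exact (le_abs_self _).trans (hexpand ▸ hρt)
    _ = _ := by ring

theorem exists_time_amplitude_small {q s : ℕ} {γ M ν σ : ℝ} (t0 : ℝ) (hq : q ≠ 0) (hs : 2 ≤ s)
    (hσ : 0 < σ) : ∃ t1 ≥ t0, ∃ C0 > 0,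
      |γ| * (C0 * t1 ^ ν) ^ (s - 1) + M * ((C0 * t1 ^ ν) ^ (s - 1) + 1) * (C0 + t1 ^ (-(1:ℝ)/q))
        < σ := by
  obtain ⟨t1, hMt1, ht1⟩ := ((((tendsto_rpow_neg_one_div_atTop hq).const_mul M).eventually
    (gt_mem_nhds (by simpa using hσ))).and (eventually_ge_atTop t0)).exists
  refine ⟨t1, ht1, ?_⟩
  have hcont : Continuous fun C : ℝ =>
      |γ| * (C * t1 ^ ν) ^ (s - 1) + M * ((C * t1 ^ ν) ^ (s - 1) + 1) * (C + t1 ^ (-(1:ℝ)/q)) := by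
    fun_prop
  have hzero : (0:ℝ) ^ (s - 1) = 0 := zero_pow (by omega)
  have hlim := (hcont.tendsto 0).mono_left (nhdsWithin_le_nhds (s := Ioi 0))
  simp only [zero_mul, hzero, mul_zero, zero_add, mul_one] at hlim
  obtain ⟨C0, hC0σ, hC0⟩ := ((hlim.eventually (gt_mem_nhds hMt1)).and self_mem_nhdsWithin).exists
  exact ⟨C0, hC0, hC0σ⟩

theorem IsAdmissible.le_mul_div_rpow_of_small {q m s : ℕ} {γ lam d0 t0 M ν t1 C0 C A : ℝ}
    {v : ℝ → ℝ} (hv : IsAdmissible q m q s γ lam d0 t0 M v) (hq : q ≠ 0) (hs : 1 ≤ s)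
    (ht0 : 0 < t0) (hM : 0 ≤ M) (hν : ν * ((s:ℝ) - 1) = 1 - (m:ℝ) / q) (hν0 : 0 ≤ ν)
    (hAν : A ≤ -ν) (ht1t0 : t0 ≤ t1)
    (hsmall : |γ| * (C0 * t1 ^ ν) ^ (s - 1)
      + M * ((C0 * t1 ^ ν) ^ (s - 1) + 1) * (C0 + t1 ^ (-(1:ℝ)/q)) < A - lam)
    (hC : C ∈ Ioc (v t1) C0) :
    ∀ t ≥ t1, v t ≤ C * (t / t1) ^ A := by
  have ht1 : 0 < t1 := ht0.trans_le ht1t0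
  obtain ⟨v', hv', hrate⟩ := hv.exists_hasDerivAt_le hq hs ht0
  refine le_mul_div_rpow_of_hasDerivAt ht1 (fun r hr => hv' r (ht1t0.trans hr)) hC.1.le
    (fun r hr hvr => ?_)
  have hr0 : 0 < r := ht1.trans_le hr
  have hr1 : 1 ≤ r / t1 := (one_le_div ht1).2 hr
  have hCpos : 0 < C := (hv.1 t1 ht1t0).1.trans_lt hC.1
  have hC0pos : 0 < C0 := hCpos.trans_le hC.2
  have hx0 : 0 < v r := hvr ▸ mul_pos hCpos (rpow_pos_of_pos (by positivity) _)
  have hxν : v r ≤ C0 * t1 ^ ν * r ^ (-ν) := by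
    calc v r ≤ C0 * (r / t1) ^ (-ν) := hvr ▸ by gcongr; exact hC.2
      _ = C0 * t1 ^ ν * r ^ (-ν) := by
        rw [div_rpow hr0.le ht1.le, rpow_neg ht1.le, div_inv_eq_mul]; ring
  have hxC0 : v r ≤ C0 := by
    calc v r ≤ C0 * 1 := hvr ▸ by
          gcongr
          exacts [hC.2, rpow_le_one_of_one_le_of_nonpos hr1 (by linarith)]
      _ = C0 := mul_one _
  have hβ0 := nonlinearRatio_nonneg (q := q) (m := m) (s := s) hr0.le hx0.le
  have hβ := nonlinearRatio_le_of_le_mul_rpow_neg hs hr0 hν hx0.le hxν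
  have he : r ^ (-(1:ℝ)/q) ≤ t1 ^ (-(1:ℝ)/q) :=
    rpow_le_rpow_of_nonpos ht1 hr (by rw [neg_div]; exact neg_nonpos.2 (by positivity))
  have hγβ : γ * nonlinearRatio q m s r (v r) ≤ |γ| * (C0 * t1 ^ ν) ^ (s - 1) :=
    (mul_le_mul_of_nonneg_right (le_abs_self γ) hβ0).trans (by gcongr)
  have hrem : M * (nonlinearRatio q m s r (v r) + 1) * (v r + r ^ (-(1:ℝ)/q))
      ≤ M * ((C0 * t1 ^ ν) ^ (s - 1) + 1) * (C0 + t1 ^ (-(1:ℝ)/q)) := by gcongr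
  calc v' r ≤ _ := hrate r (ht1t0.trans hr)
    _ < A * (v r / r) := mul_lt_mul_of_pos_right (by linarith) (div_pos hx0 hr0)

theorem exists_isAdmissible_le_mul_div_rpow {q m s : ℕ} {γ lam d0 t0 M ν σ : ℝ}
    (hq : q ≠ 0) (hs : 2 ≤ s) (ht0 : 0 < t0) (hM : 0 ≤ M)
    (hν : ν * ((s:ℝ) - 1) = 1 - (m:ℝ) / q) (hν0 : 0 ≤ ν) (hneg : lam + ν < 0) (hσ : 0 < σ) :
    ∃ δ > 0, ∃ t1 ≥ t0, ∀ v : ℝ → ℝ, IsAdmissible q m q s γ lam d0 t0 M v → v t1 ≤ δ →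
      ∀ t ≥ t1, v t ≤ v t1 * (t / t1) ^ (lam + σ) := by
  obtain ⟨σ', hσ'0, hσ'σ, hσ'ν⟩ : ∃ σ' > 0, σ' ≤ σ ∧ lam + σ' ≤ -ν :=
    ⟨min σ (-(lam + ν)), lt_min hσ (by linarith), min_le_left _ _,
      by linarith [min_le_right σ (-(lam + ν))]⟩
  obtain ⟨t1, ht1t0, C0, hC0, hsmall⟩ :=
    exists_time_amplitude_small (γ := γ) (M := M) (ν := ν) t0 hq hs hσ'0
  have ht1 : 0 < t1 := ht0.trans_le ht1t0
  refine ⟨C0 / 2, by positivity, t1, ht1t0, fun v hv hvt1 t ht => ?_⟩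
  -- A strict crossing inequality needs `v > 0` at the touching point, hence amplitudes
  -- `C > v t1` and a limit `C ↓ v t1`.
  have hlim : Tendsto (fun C => C * (t / t1) ^ (lam + σ')) (𝓝[>] (v t1))
      (𝓝 (v t1 * (t / t1) ^ (lam + σ'))) :=
    ((continuous_mul_const _).tendsto _).mono_left nhdsWithin_le_nhds
  calc v t ≤ v t1 * (t / t1) ^ (lam + σ') := by
        refine ge_of_tendsto hlim ?_
        filter_upwards [Ioc_mem_nhdsGT (hvt1.trans_lt (half_lt_self hC0))] with C hC
        exact hv.le_mul_div_rpow_of_small hq (by omega) ht0 hM hν hν0 hσ'ν ht1t0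
          (by rwa [add_sub_cancel_left]) hC t ht
    _ ≤ v t1 * (t / t1) ^ (lam + σ) :=
        mul_le_mul_of_nonneg_left (rpow_le_rpow_of_exponent_le ((one_le_div ht1).2 ht)
          (by linarith)) (hv.1 t1 ht1t0).1

theorem exists_isAdmissible_le_mul_rpow_neg {q m s : ℕ} {γ lam d0 t0 M ν : ℝ}
    (hq : q ≠ 0) (hs : 2 ≤ s) (ht0 : 0 < t0) (hM : 0 ≤ M)
    (hν : ν * ((s:ℝ) - 1) = 1 - (m:ℝ) / q) (hν0 : 0 < ν) (hγ : γ < 0) :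
    ∃ δ > 0, ∃ t1 ≥ t0, ∃ K > 0, ∀ v : ℝ → ℝ, IsAdmissible q m q s γ lam d0 t0 M v →
      v t1 ≤ δ → ∀ t ≥ t1, v t ≤ K * t ^ (-ν) := by
  obtain ⟨K, hK, hγK⟩ : ∃ K > 0, γ * K ^ (s - 1) ≤ -(ν + lam + 1) := by
    have hD : 0 < (|ν + lam| + 1) / -γ := div_pos (by positivity) (neg_pos.2 hγ)
    refine ⟨_ ^ (((s - 1 : ℕ) : ℝ)⁻¹), rpow_pos_of_pos hD _, ?_⟩
    have hγD : γ * ((|ν + lam| + 1) / -γ) = -(|ν + lam| + 1) := by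
      rw [← mul_div_assoc, div_neg, mul_div_cancel_left₀ _ hγ.ne]
    rw [rpow_inv_natCast_pow hD.le (by omega), hγD]
    linarith [le_abs_self (ν + lam)]
  have hsmall : Tendsto (fun t : ℝ => M * (K ^ (s - 1) + 1) * (K * t ^ (-ν) + t ^ (-(1:ℝ)/q)))
      atTop (𝓝 0) := by
    simpa using (((tendsto_rpow_neg_atTop hν0).const_mul K).add
      (tendsto_rpow_neg_one_div_atTop hq)).const_mul (M * (K ^ (s - 1) + 1))
  obtain ⟨t1, hsm, ht1t0⟩ :=
    ((hsmall.eventually (gt_mem_nhds one_pos)).and (eventually_ge_atTop t0)).exists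
  have ht1 : 0 < t1 := ht0.trans_le ht1t0
  refine ⟨K * t1 ^ (-ν), by positivity, t1, ht1t0, K, hK, fun v hv hvt1 t ht => ?_⟩
  obtain ⟨v', hv', hrate⟩ := hv.exists_hasDerivAt_le hq (by omega) ht0
  have hpow : ∀ r ≥ t1, K * t1 ^ (-ν) * (r / t1) ^ (-ν) = K * r ^ (-ν) := fun r hr => by
    rw [mul_assoc, ← mul_rpow ht1.le (div_pos (ht1.trans_le hr) ht1).le,
      mul_div_cancel₀ _ ht1.ne']
  refine hpow t ht ▸ le_mul_div_rpow_of_hasDerivAt ht1 (fun r hr => hv' r (ht1t0.trans hr)) hvt1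
    (fun r hr hvr => ?_) t ht
  rw [hpow r hr] at hvr
  have hr0 : 0 < r := ht1.trans_le hr
  have hx0 : 0 < v r := hvr ▸ by positivity
  have hβ : nonlinearRatio q m s r (v r) = K ^ (s - 1) :=
    hvr ▸ nonlinearRatio_mul_rpow_neg (by omega) hr0 hν
  have he : r ^ (-(1:ℝ)/q) ≤ t1 ^ (-(1:ℝ)/q) :=
    rpow_le_rpow_of_nonpos ht1 hr (by rw [neg_div]; exact neg_nonpos.2 (by positivity))
  have hx : v r ≤ K * t1 ^ (-ν) :=
    hvr ▸ mul_le_mul_of_nonneg_left (rpow_le_rpow_of_nonpos ht1 hr (neg_nonpos.2 hν0.le)) hK.le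
  have hrem : M * (K ^ (s - 1) + 1) * (v r + r ^ (-(1:ℝ)/q))
      ≤ M * (K ^ (s - 1) + 1) * (K * t1 ^ (-ν) + t1 ^ (-(1:ℝ)/q)) := by gcongr
  calc v' r ≤ _ := hrate r (ht1t0.trans hr)
    _ < -ν * (v r / r) := by
      rw [hβ]
      refine mul_lt_mul_of_pos_right ?_ (div_pos hx0 hr0)
      linarith

theorem polynomial_stability_m_lt_n_eq_q_general
    (q m n s : ℕ) (hq : 0 < q) (hmn : m < n) (hnq : n = q) (hs : 2 ≤ s)
    (γ lam d0 t0 M : ℝ)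
    (ht0 : 0 < t0) (hM : 0 < M) :
    ∀ ν : ℝ, ν = ((n:ℝ) - (m:ℝ)) / ((q:ℝ) * ((s:ℝ) - 1)) →
    ((lam + ν < 0 →
      ∀ σ > 0, ∃ δ > 0, ∃ t1 ≥ t0,
        ∀ v : ℝ → ℝ, IsAdmissible q m n s γ lam d0 t0 M v → v t1 ≤ δ →
          ∀ t ≥ t1, v t ≤ v t1 * (t / t1) ^ (lam + σ)) ∧
     (lam + ν > 0 → γ < 0 →
      ∃ δ > 0, ∃ t1 ≥ t0, ∃ K > 0,
        ∀ v : ℝ → ℝ, IsAdmissible q m n s γ lam d0 t0 M v → v t1 ≤ δ →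
          ∀ t ≥ t1, v t ≤ K * t ^ (-ν))) := by
  intro ν hν
  subst hnq
  have hs1 : (0:ℝ) < s - 1 := sub_pos.2 (by exact_mod_cast hs)
  have hqm : (m:ℝ) < n := by exact_mod_cast hmn
  have hν0 : 0 < ν := hν ▸ div_pos (by linarith) (by positivity)
  have hνs : ν * ((s:ℝ) - 1) = 1 - (m:ℝ) / n := by
    rw [hν]; field_simp [hs1.ne']
  exact ⟨fun hneg _ hσ =>
      exists_isAdmissible_le_mul_div_rpow hq.ne' hs ht0 hM.le hνs hν0.le hneg hσ,
    fun _ hγ => exists_isAdmissible_le_mul_rpow_neg hq.ne' hs ht0 hM.le hνs hν0 hγ⟩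

/-- the case `m < n = q` with `ν = (n−m)/(q(s−1))`: polynomial
stability when `λ + ν < 0`, and when `λ + ν > 0`, `γ < 0`. -/
theorem polynomial_stability_m_lt_n_eq_q
    (q m n s : ℕ) (hq : 0 < q) (hm : 0 < m) (hmn : m < n) (hnq : n = q) (hs : 2 ≤ s)
    (γ lam d0 t0 M : ℝ) (hγ : γ ≠ 0) (hlam : lam ≠ 0)
    (hd0 : 0 < d0) (ht0 : 0 < t0) (hM : 0 < M) :
    ∀ ν : ℝ, ν = ((n:ℝ) - (m:ℝ)) / ((q:ℝ) * ((s:ℝ) - 1)) →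
    ((lam + ν < 0 →
      ∀ σ > 0, ∃ δ > 0, ∃ t1 ≥ t0,
        ∀ v : ℝ → ℝ, IsAdmissible q m n s γ lam d0 t0 M v → v t1 ≤ δ →
          ∀ t ≥ t1, v t ≤ v t1 * (t / t1) ^ (lam + σ)) ∧
     (lam + ν > 0 → γ < 0 →
      ∃ δ > 0, ∃ t1 ≥ t0, ∃ K > 0,
        ∀ v : ℝ → ℝ, IsAdmissible q m n s γ lam d0 t0 M v → v t1 ≤ δ →
          ∀ t ≥ t1, v t ≤ K * t ^ (-ν))) :=
  polynomial_stability_m_lt_n_eq_q_general q m n s hq hmn hnq hs γ lam d0 t0 M ht0 hM
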